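/- Let (Ω, 𝒫) be a probability space, let (z_k)_{k∈ℕ} be a sequence of random variables taking values in [0,1] such that every finite subfamily is negatively associated, and let w : ℕ → ℝ be nonnegative with ∑_{k=1}^∞ w_k < ∞. Define F : [0,1]^ℕ → ℝ by F(c) = ∑_{k=1}^∞ w_k (1 − ∏_{k'=1}^{k} (1 − c_{k'})). Then E[F((z_k)_k)] ≥ F((E[z_k])_k), i.e., ∑_{k=1}^∞ w_k (1 − E[∏_{k'=1}^{k}(1 − z_{k'})]) ≥ ∑_{k=1}^∞ w_k (1 − ∏_{k'=1}^{k}(1 − E[z_{k'}])). (Both series converge absolutely since every summand lies in [0, w_k].) -/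

import Mathlib

open MeasureTheory

/-- A family `z` of real-valued random variables on a probability space is
*negatively associated* if for every pair of disjoint (finite) index sets `A`, `B`
and every pair of bounded measurable functions `f`, `g` that are nondecreasing in
each coordinate (i.e., monotone for the pointwise order), one has
`E[f((z_k)_{k∈A}) * g((z_k)_{k∈B})] ≤ E[f((z_k)_{k∈A})] * E[g((z_k)_{k∈B})]`.
For a sequence `z : ℕ → Ω → ℝ` this says exactly that every finite subfamily is
negatively associated. -/
def NegativelyAssociated {Ω : Type*} [MeasurableSpace Ω] (μ : Measure Ω)
    {ι : Type*} (z : ι → Ω → ℝ) : Prop :=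
  ∀ (A B : Finset ι), Disjoint A B →
    ∀ (f : (A → ℝ) → ℝ) (g : (B → ℝ) → ℝ),
      Measurable f → Measurable g →
      (∃ Cf, ∀ x, |f x| ≤ Cf) → (∃ Cg, ∀ x, |g x| ≤ Cg) →
      Monotone f → Monotone g →
      ∫ ω, f (fun k => z k.1 ω) * g (fun k => z k.1 ω) ∂μ ≤
        (∫ ω, f (fun k => z k.1 ω) ∂μ) * ∫ ω, g (fun k => z k.1 ω) ∂μ


/-- clamp `t` to `[0,1]` and subtract from 1. -/
noncomputable def cgPhi (t : ℝ) : ℝ := 1 - min 1 (max 0 t)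

lemma cgPhi_measurable : Measurable cgPhi := by
  unfold cgPhi
  exact measurable_const.sub (measurable_const.min (measurable_const.max measurable_id))

lemma cgPhi_antitone : Antitone cgPhi := by
  intro a b h
  unfold cgPhi
  gcongr

lemma cgPhi_nonneg (t : ℝ) : 0 ≤ cgPhi t := by
  unfold cgPhi
  have : min 1 (max 0 t) ≤ 1 := min_le_left _ _
  linarith

lemma cgPhi_le_one (t : ℝ) : cgPhi t ≤ 1 := by
  unfold cgPhi
  have : (0:ℝ) ≤ min 1 (max 0 t) := le_min zero_le_one (le_max_left _ _)
  linarith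

lemma cgPhi_eq (t : ℝ) (h : t ∈ Set.Icc (0:ℝ) 1) : cgPhi t = 1 - t := by
  unfold cgPhi
  rw [max_eq_right h.1, min_eq_right h.2]

theorem key_lemma
    {Ω : Type*} [MeasurableSpace Ω] (μ : Measure Ω) [IsProbabilityMeasure μ]
    (z : ℕ → Ω → ℝ)
    (hmeas : ∀ k, Measurable (z k))
    (hrange : ∀ k ω, z k ω ∈ Set.Icc (0 : ℝ) 1)
    (hNA : NegativelyAssociated μ z) (n : ℕ) :
    ∫ ω, ∏ k' ∈ Finset.range n, (1 - z k' ω) ∂μ ≤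
      ∏ k' ∈ Finset.range n, (1 - ∫ ω, z k' ω ∂μ) := by
  induction n with
  | zero => simp
  | succ n ih =>
    -- basic facts
    have hPmeas : ∀ m, Measurable (fun ω => ∏ k' ∈ Finset.range m, (1 - z k' ω)) := by
      intro m
      exact Finset.measurable_prod _ (fun k _ => measurable_const.sub (hmeas k))
    have hPnonneg : ∀ m ω, 0 ≤ ∏ k' ∈ Finset.range m, (1 - z k' ω) := by
      intro m ω
      exact Finset.prod_nonneg fun k _ => by linarith [(hrange k ω).2]
    have hPle : ∀ m ω, ∏ k' ∈ Finset.range m, (1 - z k' ω) ≤ 1 := by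
      intro m ω
      exact Finset.prod_le_one (fun k _ => by linarith [(hrange k ω).2])
        (fun k _ => by linarith [(hrange k ω).1])
    have hzint : ∀ k, Integrable (z k) μ := by
      intro k
      refine (integrable_const (1:ℝ)).mono' (hmeas k).aestronglyMeasurable ?_
      filter_upwards with ω
      rw [Real.norm_eq_abs, abs_le]
      exact ⟨by linarith [(hrange k ω).1], (hrange k ω).2⟩
    have hPint : ∀ m, Integrable (fun ω => ∏ k' ∈ Finset.range m, (1 - z k' ω)) μ := by
      intro m
      refine (integrable_const (1:ℝ)).mono' (hPmeas m).aestronglyMeasurable ?_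
      filter_upwards with ω
      rw [Real.norm_eq_abs, abs_le]
      exact ⟨by linarith [hPnonneg m ω], hPle m ω⟩
    set A : Finset ℕ := Finset.range n with hA
    set B : Finset ℕ := {n} with hB
    have hAB : Disjoint A B := by
      simp [hA, hB, Finset.disjoint_singleton_right]
    set f : (A → ℝ) → ℝ := fun x => -∏ k : A, cgPhi (x k) with hf
    have hnB : n ∈ B := by simp [hB]
    set g : (B → ℝ) → ℝ := fun x => -cgPhi (x ⟨n, hnB⟩) with hg
    have hfmeas : Measurable f := by
      apply Measurable.neg
      exact Finset.measurable_prod _ (fun k _ => cgPhi_measurable.comp (measurable_pi_apply k))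
    have hgmeas : Measurable g :=
      (cgPhi_measurable.comp (measurable_pi_apply _)).neg
    have hfbdd : ∃ Cf, ∀ x, |f x| ≤ Cf := by
      refine ⟨1, fun x => ?_⟩
      rw [hf, abs_neg, abs_of_nonneg (Finset.prod_nonneg fun k _ => cgPhi_nonneg _)]
      exact Finset.prod_le_one (fun k _ => cgPhi_nonneg _) (fun k _ => cgPhi_le_one _)
    have hgbdd : ∃ Cg, ∀ x, |g x| ≤ Cg := by
      refine ⟨1, fun x => ?_⟩
      rw [hg, abs_neg, abs_of_nonneg (cgPhi_nonneg _)]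
      exact cgPhi_le_one _
    have hfmono : Monotone f := by
      intro x y hxy
      rw [hf]
      simp only [neg_le_neg_iff]
      exact Finset.prod_le_prod (fun k _ => cgPhi_nonneg _)
        (fun k _ => cgPhi_antitone (hxy k))
    have hgmono : Monotone g := by
      intro x y hxy
      simp only [hg, neg_le_neg_iff]
      exact cgPhi_antitone (hxy _)
    have hNAap := hNA A B hAB f g hfmeas hgmeas hfbdd hgbdd hfmono hgmono
    have hfz : ∀ ω, f (fun k : A => z k.1 ω) = -∏ k' ∈ Finset.range n, (1 - z k' ω) := by
      intro ω
      rw [hf]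
      simp only [neg_inj]
      rw [show (∏ k : A, cgPhi (z k.1 ω)) = ∏ k ∈ A, cgPhi (z k ω) from
        Finset.prod_coe_sort A (fun i => cgPhi (z i ω))]
      exact Finset.prod_congr rfl (fun k _ => cgPhi_eq _ (hrange k ω))
    have hgz : ∀ ω, g (fun k : B => z k.1 ω) = -(1 - z n ω) := by
      intro ω
      rw [hg]
      simp only [neg_inj]
      exact cgPhi_eq _ (hrange n ω)
    have hmul : ∀ ω, f (fun k : A => z k.1 ω) * g (fun k : B => z k.1 ω) =
        ∏ k' ∈ Finset.range (n+1), (1 - z k' ω) := by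
      intro ω
      rw [hfz, hgz, neg_mul_neg, Finset.prod_range_succ]
    rw [show (∫ ω, f (fun k : A => z k.1 ω) * g (fun k : B => z k.1 ω) ∂μ)
        = ∫ ω, ∏ k' ∈ Finset.range (n+1), (1 - z k' ω) ∂μ from
        integral_congr_ae (Filter.Eventually.of_forall hmul)] at hNAap
    rw [show (∫ ω, f (fun k : A => z k.1 ω) ∂μ)
        = -∫ ω, ∏ k' ∈ Finset.range n, (1 - z k' ω) ∂μ by
        rw [← integral_neg]; exact integral_congr_ae (Filter.Eventually.of_forall hfz)] at hNAap
    rw [show (∫ ω, g (fun k : B => z k.1 ω) ∂μ) = -(1 - ∫ ω, z n ω ∂μ) by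
        rw [show (∫ ω, g (fun k : B => z k.1 ω) ∂μ) = ∫ ω, -(1 - z n ω) ∂μ from
          integral_congr_ae (Filter.Eventually.of_forall hgz)]
        rw [integral_neg, integral_sub (integrable_const 1) (hzint n), integral_const]
        simp] at hNAap
    rw [neg_mul_neg] at hNAap
    have h1 : 0 ≤ 1 - ∫ ω, z n ω ∂μ := by
      have : ∫ ω, z n ω ∂μ ≤ ∫ _, (1:ℝ) ∂μ :=
        integral_mono (hzint n) (integrable_const 1) (fun ω => (hrange n ω).2)
      simp only [integral_const, measure_univ, probReal_univ, ENNReal.toReal_one, smul_eq_mul, one_mul, mul_one] at this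
      linarith
    calc ∫ ω, ∏ k' ∈ Finset.range (n+1), (1 - z k' ω) ∂μ
        ≤ (∫ ω, ∏ k' ∈ Finset.range n, (1 - z k' ω) ∂μ) * (1 - ∫ ω, z n ω ∂μ) := hNAap
      _ ≤ (∏ k' ∈ Finset.range n, (1 - ∫ ω, z k' ω ∂μ)) * (1 - ∫ ω, z n ω ∂μ) :=
          mul_le_mul_of_nonneg_right ih h1
      _ = ∏ k' ∈ Finset.range (n+1), (1 - ∫ ω, z k' ω ∂μ) := (Finset.prod_range_succ _ _).symm


/-- For a sequence of `[0,1]`-valued random variables whose finite subfamilies are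
negatively associated, and nonnegative summable weights `w`, the expected caching
gain `E[∑ₖ wₖ (1 - ∏_{k'≤k} (1 - z_{k'}))]` dominates its value at the expectations:
`∑ₖ wₖ (1 - E[∏_{k'≤k} (1 - z_{k'})]) ≥ ∑ₖ wₖ (1 - ∏_{k'≤k} (1 - E[z_{k'}]))`. -/
theorem caching_gain_ge_of_negativelyAssociated
    {Ω : Type*} [MeasurableSpace Ω] (μ : Measure Ω) [IsProbabilityMeasure μ]
    (z : ℕ → Ω → ℝ)
    (hmeas : ∀ k, Measurable (z k))
    (hrange : ∀ k ω, z k ω ∈ Set.Icc (0 : ℝ) 1)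
    (hNA : NegativelyAssociated μ z)
    (w : ℕ → ℝ) (hw : ∀ k, 0 ≤ w k) (hsum : Summable w) :
    ∑' k : ℕ, w k * (1 - ∫ ω, ∏ k' ∈ Finset.range (k + 1), (1 - z k' ω) ∂μ) ≥
      ∑' k : ℕ, w k * (1 - ∏ k' ∈ Finset.range (k + 1), (1 - ∫ ω, z k' ω ∂μ)) := by

    have key : ∀ n : ℕ, ∫ ω, ∏ k' ∈ Finset.range n, (1 - z k' ω) ∂μ ≤
        ∏ k' ∈ Finset.range n, (1 - ∫ ω, z k' ω ∂μ) :=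
      key_lemma μ z hmeas hrange hNA
    have hPnonneg : ∀ m ω, 0 ≤ ∏ k' ∈ Finset.range m, (1 - z k' ω) :=
      fun m ω => Finset.prod_nonneg fun k _ => by linarith [(hrange k ω).2]
    have hPle : ∀ m ω, ∏ k' ∈ Finset.range m, (1 - z k' ω) ≤ 1 :=
      fun m ω => Finset.prod_le_one (fun k _ => by linarith [(hrange k ω).2])
        (fun k _ => by linarith [(hrange k ω).1])
    have hEz : ∀ k, (0:ℝ) ≤ ∫ ω, z k ω ∂μ ∧ ∫ ω, z k ω ∂μ ≤ 1 := by
      intro k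
      have hzint : Integrable (z k) μ := by
        refine (integrable_const (1:ℝ)).mono' (hmeas k).aestronglyMeasurable ?_
        filter_upwards with ω
        rw [Real.norm_eq_abs, abs_le]
        exact ⟨by linarith [(hrange k ω).1], (hrange k ω).2⟩
      constructor
      · exact integral_nonneg fun ω => (hrange k ω).1
      · have : ∫ ω, z k ω ∂μ ≤ ∫ _, (1:ℝ) ∂μ :=
          integral_mono hzint (integrable_const 1) (fun ω => (hrange k ω).2)
        simpa using this
    have hEP : ∀ m, (0:ℝ) ≤ ∫ ω, ∏ k' ∈ Finset.range m, (1 - z k' ω) ∂μ ∧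
        ∫ ω, ∏ k' ∈ Finset.range m, (1 - z k' ω) ∂μ ≤ 1 := by
      intro m
      have hPmeas : Measurable (fun ω => ∏ k' ∈ Finset.range m, (1 - z k' ω)) :=
        Finset.measurable_prod _ (fun k _ => measurable_const.sub (hmeas k))
      have hPint : Integrable (fun ω => ∏ k' ∈ Finset.range m, (1 - z k' ω)) μ := by
        refine (integrable_const (1:ℝ)).mono' hPmeas.aestronglyMeasurable ?_
        filter_upwards with ω
        rw [Real.norm_eq_abs, abs_le]
        exact ⟨by linarith [hPnonneg m ω], hPle m ω⟩
      constructor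
      · exact integral_nonneg fun ω => hPnonneg m ω
      · have : ∫ ω, ∏ k' ∈ Finset.range m, (1 - z k' ω) ∂μ ≤ ∫ _, (1:ℝ) ∂μ :=
          integral_mono hPint (integrable_const 1) (fun ω => hPle m ω)
        simpa using this
    have hprodE : ∀ m, (0:ℝ) ≤ ∏ k' ∈ Finset.range m, (1 - ∫ ω, z k' ω ∂μ) ∧
        ∏ k' ∈ Finset.range m, (1 - ∫ ω, z k' ω ∂μ) ≤ 1 :=
      fun m => ⟨Finset.prod_nonneg fun k _ => by linarith [(hEz k).2],
        Finset.prod_le_one (fun k _ => by linarith [(hEz k).2])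
          (fun k _ => by linarith [(hEz k).1])⟩
    have hS1 : Summable (fun k : ℕ =>
        w k * (1 - ∫ ω, ∏ k' ∈ Finset.range (k + 1), (1 - z k' ω) ∂μ)) := by
      refine Summable.of_nonneg_of_le (fun k => ?_) (fun k => ?_) hsum
      · exact mul_nonneg (hw k) (by linarith [(hEP (k+1)).2])
      · nlinarith [(hEP (k+1)).1, hw k]
    have hS2 : Summable (fun k : ℕ =>
        w k * (1 - ∏ k' ∈ Finset.range (k + 1), (1 - ∫ ω, z k' ω ∂μ))) := by
      refine Summable.of_nonneg_of_le (fun k => ?_) (fun k => ?_) hsum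
      · exact mul_nonneg (hw k) (by linarith [(hprodE (k+1)).2])
      · nlinarith [(hprodE (k+1)).1, hw k]
    exact Summable.tsum_le_tsum (fun k => by nlinarith [key (k+1), hw k]) hS2 hS1
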